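/- arXiv:math/0501300 — 3 statements merged into one kernel-verified Lean document; each statement's English description precedes it below -/
import Mathlib

section
/- Let s, t ∈ ℝ with s ≥ t and t ≤ 2. Then for all P, Q ∈ Γ_n with r ≤ p_i/q_i ≤ R for all i: (1/(4r^{t−2}))((r+1)/2)^{s−2} Φ_t(P||Q) ≤ Ω_s(Q||P) ≤ (1/(4R^{t−2}))((R+1)/2)^{s−2} Φ_t(P||Q). -/
/-!
Both sides are Csiszár divergences `∑ qᵢ f (pᵢ / qᵢ)`. For `Φ_t(P‖Q)` the generator `φ_t` can
be normalised so that `φ_t 1 = φ_t' 1 = 0` and `φ_t'' x = x ^ (t - 2)`; and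
`Ω_s(Q‖P) = Φ_s((P+Q)/2 ‖ Q)` has generator `x ↦ φ_s ((x + 1) / 2)`, with second derivative
`¼ ((x + 1) / 2) ^ (s - 2)`.
For `t ≤ s` and `t ≤ 2` the ratio of second derivatives is increasing, since
`((x + 1) / 2) ^ (s - 2) / x ^ (t - 2) = ((x + 1) / 2) ^ (s - t) * ((x + 1) / (2x)) ^ (t - 2)`.
So on `[r, R]`, which contains `1` as `P` and `Q` are both normalised, the `Ω`-generator minus the
`Φ`-generator scaled by the ratio at `r` (resp. at `R`) is convex (resp. concave) and vanishes to
first order at `1`, hence has a constant sign. Summing these pointwise bounds against `q` concludes.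
-/


open Real Finset

/-- Relative information of type `s` (generalized Kullback-Leibler divergence). -/
noncomputable def Phi (n : ℕ) (s : ℝ) (p q : Fin n → ℝ) : ℝ :=
  if s = 0 then ∑ i, q i * Real.log (q i / p i)
  else if s = 1 then ∑ i, p i * Real.log (p i / q i)
  else (s * (s - 1))⁻¹ * ((∑ i, (p i) ^ s * (q i) ^ (1 - s)) - 1)

/-- Unified relative JS and AG divergence of type `s`. -/
noncomputable def Omega (n : ℕ) (s : ℝ) (p q : Fin n → ℝ) : ℝ :=
  if s = 0 then ∑ i, p i * Real.log (2 * p i / (p i + q i))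
  else if s = 1 then ∑ i, ((p i + q i) / 2) * Real.log ((p i + q i) / (2 * p i))
  else (s * (s - 1))⁻¹ * ((∑ i, p i * ((p i + q i) / (2 * p i)) ^ s) - 1)

/-- Relative J-divergence of type `s`. -/
noncomputable def zeta (n : ℕ) (s : ℝ) (p q : Fin n → ℝ) : ℝ :=
  if s = 1 then ∑ i, (p i - q i) * Real.log ((p i + q i) / (2 * q i))
  else (s - 1)⁻¹ * ∑ i, (p i - q i) * ((p i + q i) / (2 * q i)) ^ (s - 1)

lemma ConvexOn.le_of_hasDerivAt_eq_zero {S : Set ℝ} {f : ℝ → ℝ} {c x : ℝ}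
    (hf : ConvexOn ℝ S f) (hc : c ∈ S) (hx : x ∈ S) (hfc : HasDerivAt f 0 c) : f c ≤ f x := by
  rcases lt_trichotomy c x with hcx | rfl | hxc
  · have := hf.le_slope_of_hasDerivAt hc hx hcx hfc
    rw [slope_def_field, le_div_iff₀ (sub_pos.2 hcx)] at this
    linarith
  · exact le_rfl
  · have := hf.slope_le_of_hasDerivAt hx hc hxc hfc
    rw [slope_def_field, div_le_iff₀ (sub_pos.2 hxc)] at this
    linarith

lemma le_of_hasDerivAt2_le {a b c : ℝ} {f f' f'' g g' g'' : ℝ → ℝ} (hc : c ∈ Set.Icc a b)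
    (hf : ∀ x ∈ Set.Icc a b, HasDerivAt f (f' x) x)
    (hf' : ∀ x ∈ Set.Icc a b, HasDerivAt f' (f'' x) x)
    (hg : ∀ x ∈ Set.Icc a b, HasDerivAt g (g' x) x)
    (hg' : ∀ x ∈ Set.Icc a b, HasDerivAt g' (g'' x) x)
    (hfg'' : ∀ x ∈ Set.Icc a b, g'' x ≤ f'' x) (hfgc : f c = g c) (hfgc' : f' c = g' c) :
    ∀ x ∈ Set.Icc a b, g x ≤ f x := by
  have hd (x) (hx : x ∈ Set.Icc a b) : HasDerivAt (f - g) (f' x - g' x) x :=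
    (hf x hx).sub (hg x hx)
  have hd' (x) (hx : x ∈ Set.Icc a b) : HasDerivAt (f' - g') (f'' x - g'' x) x :=
    (hf' x hx).sub (hg' x hx)
  have hconv : ConvexOn ℝ (Set.Icc a b) (f - g) := by
    refine convexOn_of_hasDerivWithinAt2_nonneg (convex_Icc a b)
      (fun x hx => (hd x hx).continuousAt.continuousWithinAt)
      (fun x hx => (hd x (interior_subset hx)).hasDerivWithinAt)
      (fun x hx => (hd' x (interior_subset hx)).hasDerivWithinAt)
      (fun x hx => sub_nonneg.2 (hfg'' x (interior_subset hx)))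
  intro x hx
  have := hconv.le_of_hasDerivAt_eq_zero hc hx (by simpa [hfgc'] using hd c hc)
  simp only [Pi.sub_apply, hfgc, sub_self] at this
  linarith

lemma HasDerivAt.comp_midpoint {f : ℝ → ℝ} {f' x : ℝ} (hf : HasDerivAt f f' ((x + 1) / 2)) :
    HasDerivAt (fun y => f ((y + 1) / 2)) (f' / 2) x := by
  have hmid : HasDerivAt (fun y : ℝ => (y + 1) / 2) (1 / 2) x := by
    simpa using ((hasDerivAt_id x).add_const 1).div_const 2
  exact (hf.comp x hmid).congr_deriv (by ring)

lemma rpow_midpoint_div_rpow_eq {s t x : ℝ} (hx : 0 < x) :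
    ((x + 1) / 2) ^ (s - 2) / x ^ (t - 2) =
      ((x + 1) / 2) ^ (s - t) * ((x + 1) / (2 * x)) ^ (t - 2) := by
  have hm : 0 < (x + 1) / 2 := by positivity
  rw [show (x + 1) / (2 * x) = (x + 1) / 2 / x by ring, Real.div_rpow hm.le hx.le,
    ← mul_div_assoc, ← Real.rpow_add hm]
  ring_nf

lemma monotoneOn_rpow_midpoint_div_rpow {s t : ℝ} (hst : t ≤ s) (ht : t ≤ 2) :
    MonotoneOn (fun x : ℝ => ((x + 1) / 2) ^ (s - 2) / x ^ (t - 2)) (Set.Ioi 0) := by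
  intro a (ha : 0 < a) b (hb : 0 < b) hab
  simp only [rpow_midpoint_div_rpow_eq ha, rpow_midpoint_div_rpow_eq hb]
  have hmid : (b + 1) / (2 * b) ≤ (a + 1) / (2 * a) := by
    rw [div_le_div_iff₀ (by positivity) (by positivity)]; nlinarith
  gcongr ?_ * ?_
  · exact Real.rpow_le_rpow (by positivity) (by linarith) (by linarith)
  · exact Real.rpow_le_rpow_of_nonpos (by positivity) hmid (by linarith)

noncomputable def phiGen (t x : ℝ) : ℝ :=
  if t = 0 then x - 1 - log x
  else if t = 1 then x * log x - x + 1
  else (t * (t - 1))⁻¹ * (x ^ t - 1 - t * (x - 1))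

noncomputable def phiGenDeriv (t x : ℝ) : ℝ :=
  if t = 1 then log x else (t - 1)⁻¹ * (x ^ (t - 1) - 1)

@[simp] lemma phiGen_one (t : ℝ) : phiGen t 1 = 0 := by
  unfold phiGen; split_ifs <;> simp

@[simp] lemma phiGenDeriv_one (t : ℝ) : phiGenDeriv t 1 = 0 := by
  unfold phiGenDeriv; split_ifs <;> simp

lemma hasDerivAt_phiGen (t : ℝ) {x : ℝ} (hx : 0 < x) :
    HasDerivAt (phiGen t) (phiGenDeriv t x) x := by
  have hlog := Real.hasDerivAt_log hx.ne'
  rcases eq_or_ne t 0 with rfl | ht0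
  · simp only [phiGen.eq_unfold, phiGenDeriv, if_true, zero_ne_one, if_false]
    refine (((hasDerivAt_id x).sub_const 1).sub hlog).congr_deriv ?_
    rw [show (0 : ℝ) - 1 = -1 by norm_num, Real.rpow_neg_one]
    simp
  rcases eq_or_ne t 1 with rfl | ht1
  · simp only [phiGen.eq_unfold, phiGenDeriv, one_ne_zero, if_false, if_true]
    refine ((((hasDerivAt_id x).mul hlog).sub (hasDerivAt_id x)).add_const 1).congr_deriv ?_
    field_simp
    simp
  · simp only [phiGen.eq_unfold, phiGenDeriv, ht0, ht1, if_false]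
    have hpow := Real.hasDerivAt_rpow_const (p := t) (Or.inl hx.ne')
    refine ((((hpow.sub_const 1).sub (((hasDerivAt_id x).sub_const 1).const_mul t))).const_mul
      _).congr_deriv ?_
    field_simp [sub_ne_zero.2 ht1]

lemma hasDerivAt_phiGenDeriv (t : ℝ) {x : ℝ} (hx : 0 < x) :
    HasDerivAt (phiGenDeriv t) (x ^ (t - 2)) x := by
  rcases eq_or_ne t 1 with rfl | ht1
  · simp only [phiGenDeriv.eq_unfold, if_true]
    rw [show (1 : ℝ) - 2 = -1 by norm_num, Real.rpow_neg_one]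
    exact Real.hasDerivAt_log hx.ne'
  · simp only [phiGenDeriv.eq_unfold, ht1, if_false]
    have hpow := Real.hasDerivAt_rpow_const (p := t - 1) (Or.inl hx.ne')
    refine ((hpow.sub_const 1).const_mul _).congr_deriv ?_
    rw [show t - 1 - 1 = t - 2 by ring]
    field_simp [sub_ne_zero.2 ht1]

lemma Phi_eq_sum_mul_phiGen (n : ℕ) (t : ℝ) {p q : Fin n → ℝ} (hp : ∀ i, 0 < p i)
    (hq : ∀ i, 0 < q i) (hp1 : ∑ i, p i = 1) (hq1 : ∑ i, q i = 1) :
    Phi n t p q = ∑ i, q i * phiGen t (p i / q i) := by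
  have hlin : ∑ i, (p i - q i) = 0 := by rw [sum_sub_distrib, hp1, hq1, sub_self]
  rcases eq_or_ne t 0 with rfl | ht0
  · have h (i) : q i * phiGen 0 (p i / q i) = q i * log (q i / p i) + (p i - q i) := by
      have hqi := (hq i).ne'
      rw [phiGen, if_pos rfl, log_div (hq i).ne' (hp i).ne', log_div (hp i).ne' (hq i).ne']
      field_simp
      ring
    simp only [Phi, if_pos, h, sum_add_distrib, hlin, add_zero]
  rcases eq_or_ne t 1 with rfl | ht1
  · have h (i) : q i * phiGen 1 (p i / q i) = p i * log (p i / q i) - (p i - q i) := by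
      have hqi := (hq i).ne'
      rw [phiGen, if_neg one_ne_zero, if_pos rfl]
      field_simp
      ring
    simp only [Phi, one_ne_zero, if_false, if_true, h, sum_sub_distrib, hlin, sub_zero]
  · have h (i) : q i * phiGen t (p i / q i) = (t * (t - 1))⁻¹ *
        (p i ^ t * q i ^ (1 - t) - q i - t * (p i - q i)) := by
      have hqi := (hq i).ne'
      rw [phiGen, if_neg ht0, if_neg ht1, Real.div_rpow (hp i).le (hq i).le,
        Real.rpow_sub (hq i), Real.rpow_one]
      field_simp
    simp only [Phi, ht0, ht1, if_false, h, ← mul_sum, sum_sub_distrib, hq1, hlin]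
    ring

lemma Omega_swap_eq_Phi_midpoint (n : ℕ) (s : ℝ) {p q : Fin n → ℝ} (hp : ∀ i, 0 < p i)
    (hq : ∀ i, 0 < q i) : Omega n s q p = Phi n s (fun i => (p i + q i) / 2) q := by
  unfold Omega Phi
  split_ifs
  · congr! 3 with i
    rw [div_div_eq_mul_div]
    ring
  · congr! 3 with i <;> ring
  · congr! 3 with i
    have hm : 0 < (p i + q i) / 2 := by linarith [hp i, hq i]
    rw [show (q i + p i) / (2 * q i) = (p i + q i) / 2 / q i by ring,
      Real.div_rpow hm.le (hq i).le, Real.rpow_sub (hq i), Real.rpow_one]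
    field_simp

lemma hasDerivAt_phiGen_midpoint (s : ℝ) {x : ℝ} (hx : 0 < x) :
    HasDerivAt (fun y => phiGen s ((y + 1) / 2)) (phiGenDeriv s ((x + 1) / 2) / 2) x :=
  (hasDerivAt_phiGen s (by linarith)).comp_midpoint

lemma hasDerivAt_phiGenDeriv_midpoint (s : ℝ) {x : ℝ} (hx : 0 < x) :
    HasDerivAt (fun y => phiGenDeriv s ((y + 1) / 2) / 2) (((x + 1) / 2) ^ (s - 2) / 4) x :=
  ((hasDerivAt_phiGenDeriv s (by linarith)).comp_midpoint.div_const 2).congr_deriv (by ring)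

section Comparison

variable {s t r R : ℝ} (hst : t ≤ s) (ht : t ≤ 2) (hr : 0 < r) (h1 : (1 : ℝ) ∈ Set.Icc r R)
include hst ht hr h1

lemma mul_phiGen_le_phiGen_midpoint :
    ∀ x ∈ Set.Icc r R,
      1 / (4 * r ^ (t - 2)) * ((r + 1) / 2) ^ (s - 2) * phiGen t x ≤ phiGen s ((x + 1) / 2) := by
  set k := 1 / (4 * r ^ (t - 2)) * ((r + 1) / 2) ^ (s - 2)
  have hpos (y) (hy : y ∈ Set.Icc r R) : 0 < y := hr.trans_le hy.1
  refine le_of_hasDerivAt2_le h1 (fun y hy => hasDerivAt_phiGen_midpoint s (hpos y hy))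
    (fun y hy => hasDerivAt_phiGenDeriv_midpoint s (hpos y hy))
    (fun y hy => (hasDerivAt_phiGen t (hpos y hy)).const_mul k)
    (fun y hy => (hasDerivAt_phiGenDeriv t (hpos y hy)).const_mul k) ?_ (by simp) (by simp)
  intro y hy
  have hmono := monotoneOn_rpow_midpoint_div_rpow hst ht hr (hpos y hy) hy.1
  rw [le_div_iff₀ (Real.rpow_pos_of_pos (hpos y hy) _)] at hmono
  have : k * y ^ (t - 2) = ((r + 1) / 2) ^ (s - 2) / r ^ (t - 2) * y ^ (t - 2) / 4 := by ring
  linarith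

lemma phiGen_midpoint_le_mul_phiGen :
    ∀ x ∈ Set.Icc r R,
      phiGen s ((x + 1) / 2) ≤ 1 / (4 * R ^ (t - 2)) * ((R + 1) / 2) ^ (s - 2) * phiGen t x := by
  set k := 1 / (4 * R ^ (t - 2)) * ((R + 1) / 2) ^ (s - 2)
  have hpos (y) (hy : y ∈ Set.Icc r R) : 0 < y := hr.trans_le hy.1
  refine le_of_hasDerivAt2_le h1 (fun y hy => (hasDerivAt_phiGen t (hpos y hy)).const_mul k)
    (fun y hy => (hasDerivAt_phiGenDeriv t (hpos y hy)).const_mul k)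
    (fun y hy => hasDerivAt_phiGen_midpoint s (hpos y hy))
    (fun y hy => hasDerivAt_phiGenDeriv_midpoint s (hpos y hy)) ?_ (by simp) (by simp)
  intro y hy
  have hmono := monotoneOn_rpow_midpoint_div_rpow hst ht (hpos y hy)
    (hpos R ⟨h1.1.trans h1.2, le_rfl⟩) hy.2
  rw [div_le_iff₀ (Real.rpow_pos_of_pos (hpos y hy) _)] at hmono
  have : k * y ^ (t - 2) = ((R + 1) / 2) ^ (s - 2) / R ^ (t - 2) * y ^ (t - 2) / 4 := by ring
  linarith

end Comparison

lemma le_one_of_forall_le_div {ι : Type*} [Fintype ι] {p q : ι → ℝ} {r : ℝ} (hq : ∀ i, 0 < q i)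
    (hp1 : ∑ i, p i = 1) (hq1 : ∑ i, q i = 1) (h : ∀ i, r ≤ p i / q i) : r ≤ 1 :=
  calc r = ∑ i, r * q i := by rw [← mul_sum, hq1, mul_one]
    _ ≤ ∑ i, p i := sum_le_sum fun i _ => (le_div_iff₀ (hq i)).1 (h i)
    _ = 1 := hp1

lemma one_le_of_forall_div_le {ι : Type*} [Fintype ι] {p q : ι → ℝ} {R : ℝ} (hq : ∀ i, 0 < q i)
    (hp1 : ∑ i, p i = 1) (hq1 : ∑ i, q i = 1) (h : ∀ i, p i / q i ≤ R) : 1 ≤ R :=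
  calc 1 = ∑ i, p i := hp1.symm
    _ ≤ ∑ i, R * q i := sum_le_sum fun i _ => (div_le_iff₀ (hq i)).1 (h i)
    _ = R := by rw [← mul_sum, hq1, mul_one]

theorem stmt_5_general (s t : ℝ) (hst : t ≤ s) (ht : t ≤ 2)
    (n : ℕ) (p q : Fin n → ℝ)
    (hp : ∀ i, 0 < p i) (hq : ∀ i, 0 < q i)
    (hp1 : ∑ i, p i = 1) (hq1 : ∑ i, q i = 1)
    (r R : ℝ) (hr : 0 < r)
    (hbound : ∀ i, r ≤ p i / q i ∧ p i / q i ≤ R) :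
    (1 / (4 * r ^ (t - 2))) * ((r + 1) / 2) ^ (s - 2) * Phi n t p q ≤ Omega n s q p ∧
      Omega n s q p ≤ (1 / (4 * R ^ (t - 2))) * ((R + 1) / 2) ^ (s - 2) * Phi n t p q := by
  have h1 : (1 : ℝ) ∈ Set.Icc r R := ⟨le_one_of_forall_le_div hq hp1 hq1 fun i => (hbound i).1,
    one_le_of_forall_div_le hq hp1 hq1 fun i => (hbound i).2⟩
  have hm i : 0 < (p i + q i) / 2 := by linarith [hp i, hq i]
  have hm1 : ∑ i, (p i + q i) / 2 = 1 := by rw [← sum_div, sum_add_distrib, hp1, hq1]; norm_num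
  have hratio i : (p i + q i) / 2 / q i = (p i / q i + 1) / 2 := by
    field_simp [(hq i).ne']
  rw [Omega_swap_eq_Phi_midpoint n s hp hq, Phi_eq_sum_mul_phiGen n s hm hq hm1 hq1,
    Phi_eq_sum_mul_phiGen n t hp hq hp1 hq1, mul_sum, mul_sum]
  simp only [hratio, mul_left_comm _ (q _)]
  exact ⟨sum_le_sum fun i _ => mul_le_mul_of_nonneg_left
      (mul_phiGen_le_phiGen_midpoint hst ht hr h1 _ (hbound i)) (hq i).le,
    sum_le_sum fun i _ => mul_le_mul_of_nonneg_left
      (phiGen_midpoint_le_mul_phiGen hst ht hr h1 _ (hbound i)) (hq i).le⟩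

theorem stmt_5 (s t : ℝ) (hst : t ≤ s) (ht : t ≤ 2)
    (n : ℕ) (hn : 2 ≤ n) (p q : Fin n → ℝ)
    (hp : ∀ i, 0 < p i) (hq : ∀ i, 0 < q i)
    (hp1 : ∑ i, p i = 1) (hq1 : ∑ i, q i = 1)
    (r R : ℝ) (hr : 0 < r) (hrR : r ≤ R)
    (hbound : ∀ i, r ≤ p i / q i ∧ p i / q i ≤ R) :
    (1 / (4 * r ^ (t - 2))) * ((r + 1) / 2) ^ (s - 2) * Phi n t p q ≤ Omega n s q p ∧
      Omega n s q p ≤ (1 / (4 * R ^ (t - 2))) * ((R + 1) / 2) ^ (s - 2) * Phi n t p q :=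
  stmt_5_general s t hst ht n p q hp hq hp1 hq1 r R hr hbound
end

section
/- Let s, t ∈ ℝ with s ≤ −1 and t ≤ −1. Then for all P, Q ∈ Γ_n with r ≤ p_i/q_i ≤ R for all i: R^{t+1} ((R+1)/2)^{s−t} Ω_t(P||Q) ≤ Ω_s(Q||P) ≤ r^{t+1} ((r+1)/2)^{s−t} Ω_t(P||Q). -/
open Real Finset

/-!
With `xᵢ = pᵢ / qᵢ`, both divergences are Csiszár sums over the weights `qᵢ`:
`Ω_s(Q‖P) = ∑ qᵢ f(xᵢ)` and `Ω_t(P‖Q) = ∑ qᵢ g(xᵢ)`, where `f = omegaFun s` and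
`g x = x * omegaFun t x⁻¹`, and `f 1 = g 1 = 0`. On `[r, R]` one has `f'' = φ g''` with
`φ x = x ^ (t + 1) * ((x + 1) / 2) ^ (s - t)` and `g'' ≥ 0`, and `φ` is decreasing when
`s, t ≤ -1`. Hence `f - φ(R) g` and `φ(r) g - f` are convex, and Jensen's inequality at the
barycenter `∑ qᵢ xᵢ = ∑ pᵢ = 1` gives both bounds.
-/

section Comparison

variable {D : Set ℝ} {f f' f'' g g' g'' : ℝ → ℝ}

theorem convexOn_of_hasDerivAt2_nonneg (hD : Convex ℝ D) (hf : ∀ x ∈ D, HasDerivAt f (f' x) x)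
    (hf' : ∀ x ∈ D, HasDerivAt f' (f'' x) x) (hf'' : ∀ x ∈ D, 0 ≤ f'' x) : ConvexOn ℝ D f :=
  convexOn_of_hasDerivWithinAt2_nonneg hD
    (fun x hx => (hf x hx).continuousAt.continuousWithinAt)
    (fun x hx => (hf x (interior_subset hx)).hasDerivWithinAt)
    (fun x hx => (hf' x (interior_subset hx)).hasDerivWithinAt)
    (fun x hx => hf'' x (interior_subset hx))

variable {ι : Type*} {s : Finset ι} {w x : ι → ℝ}

theorem ConvexOn.sum_mul_nonneg_of_map_one {h : ℝ → ℝ} (hh : ConvexOn ℝ D h) (h1 : h 1 = 0)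
    (hw : ∀ i ∈ s, 0 ≤ w i) (hw1 : ∑ i ∈ s, w i = 1) (hx : ∀ i ∈ s, x i ∈ D)
    (hwx : ∑ i ∈ s, w i * x i = 1) : 0 ≤ ∑ i ∈ s, w i * h (x i) := by
  simpa only [smul_eq_mul, hwx, h1] using hh.map_sum_le hw hw1 hx

theorem mul_sum_le_mul_sum_of_mul_deriv2_le {a b : ℝ} (hD : Convex ℝ D)
    (hf : ∀ x ∈ D, HasDerivAt f (f' x) x) (hf' : ∀ x ∈ D, HasDerivAt f' (f'' x) x)
    (hg : ∀ x ∈ D, HasDerivAt g (g' x) x) (hg' : ∀ x ∈ D, HasDerivAt g' (g'' x) x)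
    (hgf : ∀ x ∈ D, a * g'' x ≤ b * f'' x) (hf1 : f 1 = 0) (hg1 : g 1 = 0)
    (hw : ∀ i ∈ s, 0 ≤ w i) (hw1 : ∑ i ∈ s, w i = 1) (hx : ∀ i ∈ s, x i ∈ D)
    (hwx : ∑ i ∈ s, w i * x i = 1) :
    a * ∑ i ∈ s, w i * g (x i) ≤ b * ∑ i ∈ s, w i * f (x i) := by
  have hconv : ConvexOn ℝ D (fun y => b * f y - a * g y) :=
    convexOn_of_hasDerivAt2_nonneg hD
      (fun y hy => ((hf y hy).const_mul b).sub ((hg y hy).const_mul a))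
      (fun y hy => ((hf' y hy).const_mul b).sub ((hg' y hy).const_mul a))
      (fun y hy => sub_nonneg.2 (hgf y hy))
  have := hconv.sum_mul_nonneg_of_map_one (by simp [hf1, hg1]) hw hw1 hx hwx
  simp only [mul_sub, Finset.sum_sub_distrib, mul_left_comm (w _), ← Finset.mul_sum] at this
  linarith

end Comparison

section Adjoint

variable {φ φ' : ℝ → ℝ} {d x : ℝ}

theorem HasDerivAt.mul_comp_inv (hx : x ≠ 0) (hφ : HasDerivAt φ d x⁻¹) :
    HasDerivAt (fun y => y * φ y⁻¹) (φ x⁻¹ - d * x⁻¹) x := by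
  refine ((hasDerivAt_id' x).mul (hφ.comp x (hasDerivAt_inv hx))).congr_deriv ?_
  simp only [Function.comp_apply]
  field_simp
  ring

theorem HasDerivAt.comp_inv_sub_mul_inv (hx : x ≠ 0) (hφ : HasDerivAt φ (φ' x⁻¹) x⁻¹)
    (hφ' : HasDerivAt φ' d x⁻¹) :
    HasDerivAt (fun y => φ y⁻¹ - φ' y⁻¹ * y⁻¹) (d * x⁻¹ ^ 3) x := by
  have hinv := hasDerivAt_inv hx
  refine ((hφ.comp x hinv).sub ((hφ'.comp x hinv).mul hinv)).congr_deriv ?_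
  simp only [Function.comp_apply]
  field_simp
  ring

end Adjoint

noncomputable def omegaFun (s x : ℝ) : ℝ := (s * (s - 1))⁻¹ * (((x + 1) / 2) ^ s - 1)

section OmegaFun

variable {s x : ℝ}

theorem omegaFun_one (s : ℝ) : omegaFun s 1 = 0 := by
  norm_num [omegaFun]

theorem Omega_eq_sum_omegaFun (hs0 : s ≠ 0) (hs1 : s ≠ 1) {n : ℕ} {p : Fin n → ℝ} (q : Fin n → ℝ)
    (hp : ∀ i, 0 < p i) (hp1 : ∑ i, p i = 1) :
    Omega n s p q = ∑ i, p i * omegaFun s (q i / p i) := by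
  have hbase : ∀ i, (p i + q i) / (2 * p i) = (q i / p i + 1) / 2 := fun i => by
    field_simp [(hp i).ne']
    ring
  simp only [Omega, if_neg hs0, if_neg hs1, omegaFun, hbase, mul_left_comm (p _), mul_sub,
    Finset.sum_sub_distrib, ← Finset.mul_sum, ← Finset.sum_mul, hp1, one_mul]

theorem hasDerivAt_half_add_one_rpow (s : ℝ) (hx : -1 < x) :
    HasDerivAt (fun y => ((y + 1) / 2) ^ s) (s / 2 * ((x + 1) / 2) ^ (s - 1)) x := by
  refine ((((hasDerivAt_id' x).add_const 1).div_const 2).rpow_const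
    (Or.inl (by linarith))).congr_deriv ?_
  ring

theorem hasDerivAt_omegaFun (hs0 : s ≠ 0) (hx : -1 < x) :
    HasDerivAt (omegaFun s) ((2 * (s - 1))⁻¹ * ((x + 1) / 2) ^ (s - 1)) x := by
  refine (((hasDerivAt_half_add_one_rpow s hx).sub_const 1).const_mul _).congr_deriv ?_
  field_simp

theorem hasDerivAt_deriv_omegaFun (hs1 : s ≠ 1) (hx : -1 < x) :
    HasDerivAt (fun y => (2 * (s - 1))⁻¹ * ((y + 1) / 2) ^ (s - 1)) (((x + 1) / 2) ^ (s - 2) / 4)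
      x := by
  refine ((hasDerivAt_half_add_one_rpow (s - 1) hx).const_mul _).congr_deriv ?_
  rw [show s - 1 - 1 = s - 2 by ring]
  field_simp [sub_ne_zero.2 hs1]
  ring

end OmegaFun

section Ratio

variable {s t x : ℝ}

/-- The second derivatives of `omegaFun s` and of its adjoint `y ↦ y * omegaFun t y⁻¹` (for
`s, t ∉ {0, 1}`) differ by the factor `x ^ (t + 1) * ((x + 1) / 2) ^ (s - t)`. -/
theorem half_add_one_rpow_eq_mul_half_inv_add_one_rpow (hx : 0 < x) :
    ((x + 1) / 2) ^ (s - 2) / 4 =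
      x ^ (t + 1) * ((x + 1) / 2) ^ (s - t) * (((x⁻¹ + 1) / 2) ^ (t - 2) / 4 * x⁻¹ ^ 3) := by
  have hw : 0 < (x + 1) / 2 := by positivity
  rw [show (x⁻¹ + 1) / 2 = (x + 1) / 2 / x by field_simp; ring, div_rpow hw.le hx.le,
    show s - t = (s - 2) - (t - 2) by ring, rpow_sub hw (s - 2) (t - 2),
    show t + 1 = (t - 2) + (3 : ℕ) by ring, rpow_add hx, rpow_natCast]
  field_simp

theorem antitoneOn_rpow_mul_half_add_one_rpow (hs : s ≤ -1) (ht : t ≤ -1) :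
    AntitoneOn (fun x : ℝ => x ^ (t + 1) * ((x + 1) / 2) ^ (s - t)) (Set.Ioi 0) := by
  intro x (hx : 0 < x) y (hy : 0 < y) hxy
  have hw : ∀ {z : ℝ}, 0 < z → 0 < (z + 1) / 2 := fun hz => by positivity
  -- `z ^ (t + 1) * w ^ (s - t) = w ^ (s + 1) * (z / w) ^ (t + 1)` with `w = (z + 1) / 2`, and
  -- both `w` and `z / w = 2 - 2 / (z + 1)` increase with `z`
  have hsplit : ∀ {z : ℝ}, 0 < z → z ^ (t + 1) * ((z + 1) / 2) ^ (s - t) =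
      ((z + 1) / 2) ^ (s + 1) * (z / ((z + 1) / 2)) ^ (t + 1) := fun hz => by
    rw [div_rpow hz.le (hw hz).le, show s - t = (s + 1) - (t + 1) by ring, rpow_sub (hw hz)]
    field_simp
  simp only [hsplit hx, hsplit hy]
  have hquot : x / ((x + 1) / 2) ≤ y / ((y + 1) / 2) := by
    rw [div_le_div_iff₀ (hw hx) (hw hy)]
    nlinarith
  exact mul_le_mul (rpow_le_rpow_of_nonpos (hw hx) (by linarith) (by linarith))
    (rpow_le_rpow_of_nonpos (div_pos hx (hw hx)) hquot (by linarith)) (by positivity)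
    (by positivity)

end Ratio

theorem mul_sum_adjoint_le_sum_omegaFun_le_mul_sum_adjoint {s t r R : ℝ} (hs : s ≤ -1)
    (ht : t ≤ -1) (hr : 0 < r) {ι : Type*} {I : Finset ι} {w x : ι → ℝ} (hw : ∀ i ∈ I, 0 ≤ w i)
    (hw1 : ∑ i ∈ I, w i = 1) (hx : ∀ i ∈ I, x i ∈ Set.Icc r R) (hwx : ∑ i ∈ I, w i * x i = 1) :
    R ^ (t + 1) * ((R + 1) / 2) ^ (s - t) * ∑ i ∈ I, w i * (x i * omegaFun t (x i)⁻¹) ≤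
        ∑ i ∈ I, w i * omegaFun s (x i) ∧
      ∑ i ∈ I, w i * omegaFun s (x i) ≤
        r ^ (t + 1) * ((r + 1) / 2) ^ (s - t) * ∑ i ∈ I, w i * (x i * omegaFun t (x i)⁻¹) := by
  have hpos : ∀ y ∈ Set.Icc r R, 0 < y := fun y hy => hr.trans_le hy.1
  have hgt : ∀ y ∈ Set.Icc r R, -1 < y := fun y hy => by linarith [hpos y hy]
  have hgt_inv : ∀ y ∈ Set.Icc r R, -1 < y⁻¹ := fun y hy => by linarith [inv_pos.2 (hpos y hy)]
  have hf := fun y hy => hasDerivAt_omegaFun (s := s) (by linarith) (hgt y hy)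
  have hf' := fun y hy => hasDerivAt_deriv_omegaFun (s := s) (by linarith) (hgt y hy)
  have hg := fun y hy =>
    (hasDerivAt_omegaFun (s := t) (by linarith) (hgt_inv y hy)).mul_comp_inv (hpos y hy).ne'
  have hg' := fun y hy => HasDerivAt.comp_inv_sub_mul_inv (hpos y hy).ne'
    (hasDerivAt_omegaFun (s := t) (by linarith) (hgt_inv y hy))
    (hasDerivAt_deriv_omegaFun (s := t) (by linarith) (hgt_inv y hy))
  have hg''_nonneg : ∀ y ∈ Set.Icc r R, 0 ≤ ((y⁻¹ + 1) / 2) ^ (t - 2) / 4 * y⁻¹ ^ 3 :=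
    fun y hy => by have := hpos y hy; positivity
  have hratio := fun y (hy : y ∈ Set.Icc r R) =>
    half_add_one_rpow_eq_mul_half_inv_add_one_rpow (s := s) (t := t) (hpos y hy)
  have hanti := antitoneOn_rpow_mul_half_add_one_rpow hs ht
  constructor
  · simpa only [one_mul] using
      mul_sum_le_mul_sum_of_mul_deriv2_le (b := 1) (convex_Icc r R) hf hf' hg hg'
      (fun y hy => by
        rw [one_mul, hratio y hy]
        exact mul_le_mul_of_nonneg_right (hanti (hpos y hy) (hr.trans_le (hy.1.trans hy.2)) hy.2)
          (hg''_nonneg y hy))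
      (omegaFun_one s) (by simp [omegaFun_one]) hw hw1 hx hwx
  · simpa only [one_mul] using
      mul_sum_le_mul_sum_of_mul_deriv2_le (a := 1) (convex_Icc r R) hg hg' hf hf'
      (fun y hy => by
        rw [one_mul, hratio y hy]
        exact mul_le_mul_of_nonneg_right (hanti hr (hpos y hy) hy.1) (hg''_nonneg y hy))
      (by simp [omegaFun_one]) (omegaFun_one s) hw hw1 hx hwx

theorem stmt_12_general (s t : ℝ) (hs : s ≤ -1) (ht : t ≤ -1)
    (n : ℕ) (p q : Fin n → ℝ)
    (hp : ∀ i, 0 < p i) (hq : ∀ i, 0 < q i)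
    (hp1 : ∑ i, p i = 1) (hq1 : ∑ i, q i = 1)
    (r R : ℝ) (hr : 0 < r)
    (hbound : ∀ i, r ≤ p i / q i ∧ p i / q i ≤ R) :
    R ^ (t + 1) * ((R + 1) / 2) ^ (s - t) * Omega n t p q ≤ Omega n s q p ∧
      Omega n s q p ≤ r ^ (t + 1) * ((r + 1) / 2) ^ (s - t) * Omega n t p q := by
  have hq_mul : ∀ i, q i * (p i / q i) = p i := fun i => mul_div_cancel₀ _ (hq i).ne'
  have hΩs : Omega n s q p = ∑ i, q i * omegaFun s (p i / q i) :=
    Omega_eq_sum_omegaFun (by linarith) (by linarith) p hq hq1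
  have hΩt : Omega n t p q = ∑ i, q i * (p i / q i * omegaFun t (p i / q i)⁻¹) := by
    simp only [Omega_eq_sum_omegaFun (s := t) (by linarith) (by linarith) q hp hp1, ← mul_assoc,
      hq_mul, inv_div]
  rw [hΩs, hΩt]
  exact mul_sum_adjoint_le_sum_omegaFun_le_mul_sum_adjoint hs ht hr (fun i _ => (hq i).le) hq1
    (fun i _ => hbound i) (by simp only [hq_mul, hp1])

theorem stmt_12 (s t : ℝ) (hs : s ≤ -1) (ht : t ≤ -1)
    (n : ℕ) (hn : 2 ≤ n) (p q : Fin n → ℝ)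
    (hp : ∀ i, 0 < p i) (hq : ∀ i, 0 < q i)
    (hp1 : ∑ i, p i = 1) (hq1 : ∑ i, q i = 1)
    (r R : ℝ) (hr : 0 < r) (hrR : r ≤ R)
    (hbound : ∀ i, r ≤ p i / q i ∧ p i / q i ≤ R) :
    R ^ (t + 1) * ((R + 1) / 2) ^ (s - t) * Omega n t p q ≤ Omega n s q p ∧
      Omega n s q p ≤ r ^ (t + 1) * ((r + 1) / 2) ^ (s - t) * Omega n t p q :=
  stmt_12_general s t hs ht n p q hp hq hp1 hq1 r R hr hbound
end

section
/- Let s, t ∈ ℝ with 0 ≤ s ≤ 4 and t ≥ −1. Then for all P, Q ∈ Γ_n with r ≤ p_i/q_i ≤ R for all i: r^{t+1} ((r+1)/2)^{s−t−1} (sr + 4 − s) Ω_t(P||Q) ≤ ζ_s(P||Q) ≤ R^{t+1} ((R+1)/2)^{s−t−1} (sR + 4 − s) Ω_t(P||Q). -/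
open Real Finset

/-!
Both divergences are Csiszár divergences `∑ qᵢ F (pᵢ / qᵢ)`: `ζ_s` with generator
`f x = (x - 1) · L_s ((x + 1) / 2)`, where `L_s' u = u ^ (s - 2)`, and `Ω_t` with the perspective
`g x = x · ψ_t ((x + 1) / (2x))` of the α-divergence generator `ψ_t`, `ψ_t'' u = u ^ (t - 2)`.
A direct computation gives `f'' = h · g''` with `g'' > 0` and
`h x = x ^ (t + 1) ((x + 1) / 2) ^ (s - t - 1) (s x + 4 - s)`, which is increasing for
`0 ≤ s ≤ 4`, `t ≥ -1`. So `f - h r · g` and `h R · g - f` are convex on `[r, R]` and vanish at `1`,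
and by Jensen's inequality (`∑ qᵢ (pᵢ / qᵢ) = 1`) their divergences are nonnegative.
-/

open Set

noncomputable def csiszarDiv {ι : Type*} [Fintype ι] (F : ℝ → ℝ) (p q : ι → ℝ) : ℝ :=
  ∑ i, q i * F (p i / q i)

section Csiszar

variable {ι : Type*} [Fintype ι] {p q : ι → ℝ}

theorem csiszarDiv_sub_const_mul (F G : ℝ → ℝ) (c : ℝ) :
    csiszarDiv (fun x => F x - c * G x) p q = csiszarDiv F p q - c * csiszarDiv G p q := by
  simp only [csiszarDiv, mul_sub, sum_sub_distrib, mul_sum]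
  congr 1
  exact sum_congr rfl fun i _ => by ring

theorem csiszarDiv_const_mul_sub (F G : ℝ → ℝ) (c : ℝ) :
    csiszarDiv (fun x => c * G x - F x) p q = c * csiszarDiv G p q - csiszarDiv F p q := by
  simp only [csiszarDiv, mul_sub, sum_sub_distrib, mul_sum]
  congr 1
  exact sum_congr rfl fun i _ => by ring

theorem ConvexOn.csiszarDiv_nonneg {D : Set ℝ} {F : ℝ → ℝ} (hF : ConvexOn ℝ D F) (hF1 : F 1 = 0)
    (hq : ∀ i, 0 < q i) (hp1 : ∑ i, p i = 1) (hq1 : ∑ i, q i = 1) (hpq : ∀ i, p i / q i ∈ D) :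
    0 ≤ csiszarDiv F p q := by
  have jensen := hF.map_sum_le (t := univ) (w := q) (p := fun i => p i / q i)
    (fun i _ => (hq i).le) hq1 (fun i _ => hpq i)
  simp only [smul_eq_mul, fun i => mul_div_cancel₀ (p i) (hq i).ne', hp1, hF1] at jensen
  exact jensen

theorem convexOn_of_hasDerivAt2_nonneg_s13 {D : Set ℝ} (hD : Convex ℝ D) {F F' F'' : ℝ → ℝ}
    (hF : ∀ x ∈ D, HasDerivAt F (F' x) x) (hF' : ∀ x ∈ D, HasDerivAt F' (F'' x) x)
    (hF'' : ∀ x ∈ D, 0 ≤ F'' x) : ConvexOn ℝ D F :=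
  convexOn_of_hasDerivWithinAt2_nonneg hD
    (fun x hx => (hF x hx).continuousAt.continuousWithinAt)
    (fun x hx => (hF x (interior_subset hx)).hasDerivWithinAt)
    (fun x hx => (hF' x (interior_subset hx)).hasDerivWithinAt)
    (fun x hx => hF'' x (interior_subset hx))

theorem csiszarDiv_bounds_of_hasDerivAt2 {D : Set ℝ} (hD : Convex ℝ D)
    {f f' f'' g g' g'' : ℝ → ℝ} {m M : ℝ}
    (hf : ∀ x ∈ D, HasDerivAt f (f' x) x) (hf' : ∀ x ∈ D, HasDerivAt f' (f'' x) x)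
    (hg : ∀ x ∈ D, HasDerivAt g (g' x) x) (hg' : ∀ x ∈ D, HasDerivAt g' (g'' x) x)
    (hf1 : f 1 = 0) (hg1 : g 1 = 0)
    (hm : ∀ x ∈ D, m * g'' x ≤ f'' x) (hM : ∀ x ∈ D, f'' x ≤ M * g'' x)
    (hq : ∀ i, 0 < q i) (hp1 : ∑ i, p i = 1) (hq1 : ∑ i, q i = 1) (hpq : ∀ i, p i / q i ∈ D) :
    m * csiszarDiv g p q ≤ csiszarDiv f p q ∧ csiszarDiv f p q ≤ M * csiszarDiv g p q := by
  have lower : ConvexOn ℝ D (fun x => f x - m * g x) :=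
    convexOn_of_hasDerivAt2_nonneg_s13 hD (fun x hx => (hf x hx).sub ((hg x hx).const_mul m))
      (fun x hx => (hf' x hx).sub ((hg' x hx).const_mul m)) (fun x hx => sub_nonneg.2 (hm x hx))
  have upper : ConvexOn ℝ D (fun x => M * g x - f x) :=
    convexOn_of_hasDerivAt2_nonneg_s13 hD (fun x hx => ((hg x hx).const_mul M).sub (hf x hx))
      (fun x hx => ((hg' x hx).const_mul M).sub (hf' x hx)) (fun x hx => sub_nonneg.2 (hM x hx))
  constructor
  · have := lower.csiszarDiv_nonneg (by simp [hf1, hg1]) hq hp1 hq1 hpq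
    rw [csiszarDiv_sub_const_mul] at this
    linarith
  · have := upper.csiszarDiv_nonneg (by simp [hf1, hg1]) hq hp1 hq1 hpq
    rw [csiszarDiv_const_mul_sub] at this
    linarith

end Csiszar

noncomputable def midPerspective (ψ : ℝ → ℝ) (x : ℝ) : ℝ := x * ψ ((x + 1) / (2 * x))

noncomputable def midPerspectiveDeriv (ψ ψ' : ℝ → ℝ) (x : ℝ) : ℝ :=
  ψ ((x + 1) / (2 * x)) - ψ' ((x + 1) / (2 * x)) / (2 * x)

theorem hasDerivAt_midRatio {x : ℝ} (hx : 0 < x) :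
    HasDerivAt (fun y : ℝ => (y + 1) / (2 * y)) (-1 / (2 * x ^ 2)) x := by
  refine (((hasDerivAt_id x).add_const 1).div ((hasDerivAt_id x).const_mul 2)
    (by positivity)).congr_deriv ?_
  simp only [id]
  field_simp
  ring

section MidPerspective

variable {ψ ψ' ψ'' : ℝ → ℝ} {x : ℝ}

theorem hasDerivAt_midPerspective (hx : 0 < x)
    (hψ : HasDerivAt ψ (ψ' ((x + 1) / (2 * x))) ((x + 1) / (2 * x))) :
    HasDerivAt (midPerspective ψ) (midPerspectiveDeriv ψ ψ' x) x := by
  refine ((hasDerivAt_id x).mul (hψ.comp x (hasDerivAt_midRatio hx))).congr_deriv ?_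
  simp only [midPerspectiveDeriv, id, Function.comp_apply]
  field_simp
  ring

theorem hasDerivAt_midPerspectiveDeriv (hx : 0 < x)
    (hψ : HasDerivAt ψ (ψ' ((x + 1) / (2 * x))) ((x + 1) / (2 * x)))
    (hψ' : HasDerivAt ψ' (ψ'' ((x + 1) / (2 * x))) ((x + 1) / (2 * x))) :
    HasDerivAt (midPerspectiveDeriv ψ ψ') (ψ'' ((x + 1) / (2 * x)) / (4 * x ^ 3)) x := by
  have hu := hasDerivAt_midRatio hx
  refine ((hψ.comp x hu).sub ((hψ'.comp x hu).div ((hasDerivAt_id x).const_mul 2)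
    (by positivity))).congr_deriv ?_
  simp only [id, Function.comp_apply]
  field_simp
  ring

end MidPerspective

noncomputable def logType (s u : ℝ) : ℝ :=
  if s = 1 then Real.log u else (s - 1)⁻¹ * u ^ (s - 1)

theorem hasDerivAt_logType (s : ℝ) {u : ℝ} (hu : 0 < u) :
    HasDerivAt (logType s) (u ^ (s - 2)) u := by
  by_cases hs : s = 1
  · have : logType s = Real.log := funext fun v => if_pos hs
    rw [this, hs, show (1 : ℝ) - 2 = -1 by norm_num, rpow_neg_one]
    exact hasDerivAt_log hu.ne'
  · have : logType s = fun v => (s - 1)⁻¹ * v ^ (s - 1) := funext fun v => if_neg hs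
    rw [this]
    refine ((hasDerivAt_rpow_const (Or.inl hu.ne')).const_mul (s - 1)⁻¹).congr_deriv ?_
    rw [← mul_assoc, inv_mul_cancel₀ (sub_ne_zero.2 hs), one_mul]
    ring_nf

theorem hasDerivAt_half_add_one (x : ℝ) : HasDerivAt (fun y : ℝ => (y + 1) / 2) (1 / 2) x := by
  simpa using ((hasDerivAt_id x).add_const 1).div_const 2

noncomputable def zetaGen (s x : ℝ) : ℝ := (x - 1) * logType s ((x + 1) / 2)

noncomputable def zetaGenDeriv (s x : ℝ) : ℝ :=
  logType s ((x + 1) / 2) + (x - 1) / 2 * ((x + 1) / 2) ^ (s - 2)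

theorem zetaGen_one (s : ℝ) : zetaGen s 1 = 0 := by simp [zetaGen]

theorem hasDerivAt_zetaGen (s : ℝ) {x : ℝ} (hx : 0 < x) :
    HasDerivAt (zetaGen s) (zetaGenDeriv s x) x := by
  have hw : 0 < (x + 1) / 2 := by positivity
  have := ((hasDerivAt_id x).sub_const 1).mul
    ((hasDerivAt_logType s hw).comp x (hasDerivAt_half_add_one x))
  refine this.congr_deriv ?_
  simp only [zetaGenDeriv, id, Function.comp_apply]
  ring

theorem hasDerivAt_zetaGenDeriv (s : ℝ) {x : ℝ} (hx : 0 < x) :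
    HasDerivAt (zetaGenDeriv s) (((x + 1) / 2) ^ (s - 3) * (s * x + 4 - s) / 4) x := by
  have hw : 0 < (x + 1) / 2 := by positivity
  have := ((hasDerivAt_logType s hw).comp x (hasDerivAt_half_add_one x)).add
    ((((hasDerivAt_id x).sub_const 1).div_const 2).mul
      ((hasDerivAt_half_add_one x).rpow_const (p := s - 2) (Or.inl hw.ne')))
  refine this.congr_deriv ?_
  have hpow : ((x + 1) / 2) ^ (s - 2) = ((x + 1) / 2) ^ (s - 3) * ((x + 1) / 2) := by
    rw [← rpow_add_one hw.ne']; ring_nf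
  simp only [id, show s - 2 - 1 = s - 3 by ring, hpow]
  ring

noncomputable def alphaGen (t u : ℝ) : ℝ :=
  if t = 0 then -Real.log u
  else if t = 1 then u * Real.log u
  else (t * (t - 1))⁻¹ * (u ^ t - 1)

-- The `+ 1` at `t = 1` is the derivative of `u ↦ u * log u` being `log u + 1`.
noncomputable def alphaGenDeriv (t u : ℝ) : ℝ := logType t u + if t = 1 then 1 else 0

theorem alphaGen_one (t : ℝ) : alphaGen t 1 = 0 := by
  simp [alphaGen]

theorem hasDerivAt_alphaGen (t : ℝ) {u : ℝ} (hu : 0 < u) :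
    HasDerivAt (alphaGen t) (alphaGenDeriv t u) u := by
  by_cases ht0 : t = 0
  · have : alphaGen t = fun v => -Real.log v := funext fun v => if_pos ht0
    rw [this]
    refine (hasDerivAt_log hu.ne').neg.congr_deriv ?_
    simp [alphaGenDeriv, logType, ht0, rpow_neg_one]
  by_cases ht1 : t = 1
  · have : alphaGen t = fun v => v * Real.log v := funext fun v => by simp [alphaGen, ht1]
    rw [this]
    refine ((hasDerivAt_id u).mul (hasDerivAt_log hu.ne')).congr_deriv ?_
    simp [alphaGenDeriv, logType, ht1, hu.ne']
  · have : alphaGen t = fun v => (t * (t - 1))⁻¹ * (v ^ t - 1) :=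
      funext fun v => by simp [alphaGen, ht0, ht1]
    rw [this]
    refine (((hasDerivAt_rpow_const (Or.inl hu.ne')).sub_const 1).const_mul _).congr_deriv ?_
    have : t - 1 ≠ 0 := sub_ne_zero.2 ht1
    simp only [alphaGenDeriv, logType, ht1, if_false, add_zero]
    field_simp

theorem hasDerivAt_alphaGenDeriv (t : ℝ) {u : ℝ} (hu : 0 < u) :
    HasDerivAt (alphaGenDeriv t) (u ^ (t - 2)) u :=
  (hasDerivAt_logType t hu).add_const _

theorem zeta_eq_csiszarDiv {n : ℕ} (s : ℝ) {p q : Fin n → ℝ} (hq : ∀ i, 0 < q i) :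
    zeta n s p q = csiszarDiv (zetaGen s) p q := by
  have term : ∀ i, q i * zetaGen s (p i / q i)
      = (p i - q i) * logType s ((p i + q i) / (2 * q i)) := fun i => by
    have := (hq i).ne'
    rw [zetaGen, show (p i / q i + 1) / 2 = (p i + q i) / (2 * q i) by field_simp]
    field_simp
  simp only [csiszarDiv, term, zeta, logType]
  split_ifs
  · rfl
  · rw [mul_sum]
    exact sum_congr rfl fun i _ => by ring

theorem Omega_eq_csiszarDiv {n : ℕ} (t : ℝ) {p q : Fin n → ℝ} (hp : ∀ i, 0 < p i)
    (hq : ∀ i, 0 < q i) (hp1 : ∑ i, p i = 1) :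
    Omega n t p q = csiszarDiv (midPerspective (alphaGen t)) p q := by
  have term : ∀ i, q i * midPerspective (alphaGen t) (p i / q i)
      = p i * alphaGen t ((p i + q i) / (2 * p i)) := fun i => by
    have := (hp i).ne'
    have := (hq i).ne'
    rw [midPerspective, show (p i / q i + 1) / (2 * (p i / q i)) = (p i + q i) / (2 * p i) by
      field_simp]
    field_simp
  simp only [csiszarDiv, term, Omega, alphaGen]
  split_ifs with ht0 ht1
  · refine sum_congr rfl fun i _ => ?_
    rw [← log_inv, inv_div]
  · refine sum_congr rfl fun i _ => ?_
    have := (hp i).ne'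
    field_simp
  · have distrib : ∀ i, p i * ((t * (t - 1))⁻¹ * (((p i + q i) / (2 * p i)) ^ t - 1))
        = (t * (t - 1))⁻¹ * (p i * ((p i + q i) / (2 * p i)) ^ t - p i) := fun i => by ring
    rw [sum_congr rfl fun i _ => distrib i, ← mul_sum, sum_sub_distrib, hp1]

noncomputable def derivRatio (s t x : ℝ) : ℝ :=
  x ^ (t + 1) * ((x + 1) / 2) ^ (s - t - 1) * (s * x + 4 - s)

theorem derivRatio_mul {x : ℝ} (hx : 0 < x) (s t : ℝ) :
    derivRatio s t x * (((x + 1) / (2 * x)) ^ (t - 2) / (4 * x ^ 3))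
      = ((x + 1) / 2) ^ (s - 3) * (s * x + 4 - s) / 4 := by
  have hw : 0 < (x + 1) / 2 := by positivity
  have hx3 : x ^ (t + 1) = x ^ (t - 2) * x ^ 3 := by
    rw [← rpow_natCast, ← rpow_add hx]; norm_num; ring_nf
  have hw3 : ((x + 1) / 2) ^ (s - t - 1) * ((x + 1) / 2) ^ (t - 2) = ((x + 1) / 2) ^ (s - 3) := by
    rw [← rpow_add hw]; ring_nf
  rw [show (x + 1) / (2 * x) = ((x + 1) / 2) / x by ring, div_rpow hw.le hx.le, derivRatio, hx3,
    ← hw3]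
  have : 0 < x ^ (t - 2) := rpow_pos_of_pos hx _
  field_simp

theorem derivRatio_eq {x : ℝ} (hx : 0 < x) (s t : ℝ) :
    derivRatio s t x = (2 * x / (x + 1)) ^ (t + 1) * ((x + 1) / 2) ^ s * (s * x + 4 - s) := by
  have hw : 0 < (x + 1) / 2 := by positivity
  rw [derivRatio, show 2 * x / (x + 1) = x / ((x + 1) / 2) by field_simp, div_rpow hx.le hw.le,
    show s - t - 1 = s - (t + 1) by ring, rpow_sub hw]
  field_simp

theorem monotoneOn_derivRatio {s t : ℝ} (hs0 : 0 ≤ s) (hs4 : s ≤ 4) (ht : -1 ≤ t) :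
    MonotoneOn (derivRatio s t) (Ioi 0) := by
  intro a (ha : 0 < a) b (hb : 0 < b) hab
  rw [derivRatio_eq ha, derivRatio_eq hb]
  have hmean : 2 * a / (a + 1) ≤ 2 * b / (b + 1) := by
    rw [div_le_div_iff₀ (by positivity) (by positivity)]
    nlinarith
  have hlin : s * a + 4 - s ≤ s * b + 4 - s := by nlinarith
  gcongr
  · nlinarith
  · linarith

theorem stmt_13_general (s t : ℝ) (hs0 : 0 ≤ s) (hs4 : s ≤ 4) (ht : -1 ≤ t)
    (n : ℕ) (p q : Fin n → ℝ)
    (hp : ∀ i, 0 < p i) (hq : ∀ i, 0 < q i)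
    (hp1 : ∑ i, p i = 1) (hq1 : ∑ i, q i = 1)
    (r R : ℝ) (hr : 0 < r)
    (hbound : ∀ i, r ≤ p i / q i ∧ p i / q i ≤ R) :
    r ^ (t + 1) * ((r + 1) / 2) ^ (s - t - 1) * (s * r + 4 - s) * Omega n t p q ≤ zeta n s p q ∧
      zeta n s p q ≤ R ^ (t + 1) * ((R + 1) / 2) ^ (s - t - 1) * (s * R + 4 - s) * Omega n t p q := by
  have hpos : ∀ x ∈ Icc r R, 0 < x := fun x hx => hr.trans_le hx.1
  have hu : ∀ x ∈ Icc r R, 0 < (x + 1) / (2 * x) := fun x hx => by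
    have := hpos x hx; positivity
  have hmono := monotoneOn_derivRatio hs0 hs4 ht
  rw [zeta_eq_csiszarDiv s hq, Omega_eq_csiszarDiv t hp hq hp1]
  refine csiszarDiv_bounds_of_hasDerivAt2 (convex_Icc r R)
    (fun x hx => hasDerivAt_zetaGen s (hpos x hx))
    (fun x hx => hasDerivAt_zetaGenDeriv s (hpos x hx))
    (fun x hx => hasDerivAt_midPerspective (hpos x hx) (hasDerivAt_alphaGen t (hu x hx)))
    (fun x hx => hasDerivAt_midPerspectiveDeriv (ψ'' := fun u => u ^ (t - 2)) (hpos x hx)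
      (hasDerivAt_alphaGen t (hu x hx)) (hasDerivAt_alphaGenDeriv t (hu x hx)))
    (zetaGen_one s) (by simp [midPerspective, alphaGen_one])
    (fun x hx => ?_) (fun x hx => ?_) hq hp1 hq1 hbound
  all_goals
    have hx0 := hpos x hx
    rw [← derivRatio_mul hx0 s t]
    gcongr
  · exact hmono hr hx0 hx.1
  · exact hmono hx0 (hx0.trans_le hx.2) hx.2

theorem stmt_13 (s t : ℝ) (hs0 : 0 ≤ s) (hs4 : s ≤ 4) (ht : -1 ≤ t)
    (n : ℕ) (hn : 2 ≤ n) (p q : Fin n → ℝ)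
    (hp : ∀ i, 0 < p i) (hq : ∀ i, 0 < q i)
    (hp1 : ∑ i, p i = 1) (hq1 : ∑ i, q i = 1)
    (r R : ℝ) (hr : 0 < r) (hrR : r ≤ R)
    (hbound : ∀ i, r ≤ p i / q i ∧ p i / q i ≤ R) :
    r ^ (t + 1) * ((r + 1) / 2) ^ (s - t - 1) * (s * r + 4 - s) * Omega n t p q ≤ zeta n s p q ∧
      zeta n s p q ≤ R ^ (t + 1) * ((R + 1) / 2) ^ (s - t - 1) * (s * R + 4 - s) * Omega n t p q :=
  stmt_13_general s t hs0 hs4 ht n p q hp hq hp1 hq1 r R hr hbound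
end
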